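/- arXiv:2010.11597 — 2 statements merged into one kernel-verified Lean document; each statement's English description precedes it below -/
import Mathlib

section
/- Let κ be a regular cardinal such that λ^ω < κ for every cardinal λ < κ. Then every locally coherent κ-Kurepa subtree of ^{<κ}κ is superthin. -/
open Cardinal Set

noncomputable section

namespace GBaire

universe u

/-- The underlying well-ordered set of the cardinal `κ`, i.e. the type of ordinals `< κ`. -/
abbrev K (κ : Cardinal.{u}) : Type u := κ.ord.ToType

/-- The set `^{<κ}κ` of all functions from a proper initial segment of `κ` to `κ`. -/
abbrev PreFun (κ : Cardinal.{u}) : Type u := Σ α : K κ, ({β : K κ // β < α} → K κ)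

variable (κ : Cardinal.{u})

/-- The restriction `x ↾ α` of a function `x ∈ ^κκ` to the initial segment determined by `α`. -/
def resT (x : K κ → K κ) (α : K κ) : PreFun κ := ⟨α, fun β => x β.1⟩

/-- The restriction of `s ∈ ^{<κ}κ` to (the minimum of its domain and) `γ`.  When
`γ ≤ s.1` this is the restriction `s ↾ γ`; otherwise it equals `s`. -/
def cut (s : PreFun κ) (γ : K κ) : PreFun κ :=
  ⟨min γ s.1, fun β => s.2 ⟨β.1, lt_of_lt_of_le β.2 (min_le_right _ _)⟩⟩

/-- A subtree of `^{<κ}κ`: a set of elements of `^{<κ}κ` closed under restrictions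
to smaller ordinals. -/
def IsSubtree (T : Set (PreFun κ)) : Prop :=
  ∀ s ∈ T, ∀ γ : K κ, γ < s.1 → cut κ s γ ∈ T

/-- The `α`-th level `T(α)` of `T`. -/
def level (T : Set (PreFun κ)) (α : K κ) : Set (PreFun κ) := {s ∈ T | s.1 = α}

/-- The set `[T]` of cofinal branches of `T`, i.e. all `x ∈ ^κκ` all of whose
restrictions lie in `T`. -/
def branches (T : Set (PreFun κ)) : Set (K κ → K κ) := {x | ∀ α : K κ, resT κ x α ∈ T}

/-- `T` is a `κ`-Kurepa subtree of `^{<κ}κ`: a subtree all of whose levels are nonempty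
of cardinality `< κ` and with at least `κ⁺` many cofinal branches. -/
def IsKurepa (T : Set (PreFun κ)) : Prop :=
  IsSubtree κ T ∧ (∀ α : K κ, (level κ T α).Nonempty ∧ #(level κ T α) < κ) ∧
    Order.succ κ ≤ #(branches κ T)

/-- The basic open set `N_s = {x ∈ ^κκ | s ⊆ x}`. -/
def Nbhd (s : PreFun κ) : Set (K κ → K κ) := {x | resT κ x s.1 = s}

/-- The topology of the generalized Baire space `^κκ`, generated by the sets `N_s`. -/
def baire : TopologicalSpace (K κ → K κ) :=
  TopologicalSpace.generateFrom {U | ∃ s : PreFun κ, U = Nbhd κ s}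

/-- `X` is a continuous image of `^κκ`: there is a continuous surjection from `^κκ`
onto `X` (with the subspace topology). -/
def IsContImage (X : Set (K κ → K κ)) : Prop :=
  letI := baire κ
  ∃ f : (K κ → K κ) → X, Continuous f ∧ Function.Surjective f

/-- `X` is a retract of `^κκ`: there is a continuous `r : ^κκ → ^κκ` with range
contained in `X` that is the identity on `X`. -/
def IsRetract (X : Set (K κ → K κ)) : Prop :=
  letI := baire κ
  ∃ r : (K κ → K κ) → (K κ → K κ),
    Continuous r ∧ Set.range r ⊆ X ∧ ∀ x ∈ X, r x = x

/-- `y` is an isolated point of `Y ⊆ ^κκ`. -/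
def IsIsolatedIn (Y : Set (K κ → K κ)) (y : K κ → K κ) : Prop :=
  y ∈ Y ∧ ∃ α : K κ, Nbhd κ (resT κ y α) ∩ Y = {y}

/-- `T` is slim: `|T(α)| ≤ |α|` for all sufficiently large `α < κ`. -/
def IsSlim (T : Set (PreFun κ)) : Prop :=
  ∃ α₀ : K κ, ∀ α : K κ, α₀ ≤ α → #(level κ T α) ≤ #{β : K κ // β < α}

/-- `C ⊆ κ` is closed: it contains every least upper bound of a nonempty subset of `C`. -/
def ClosedIn (C : Set (K κ)) : Prop :=
  ∀ A ⊆ C, A.Nonempty → ∀ x : K κ, IsLUB A x → x ∈ C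

/-- `C ⊆ κ` is unbounded in `κ`. -/
def UnboundedIn (C : Set (K κ)) : Prop := ∀ x : K κ, ∃ y ∈ C, x < y

/-- `S ⊆ κ` is stationary in `κ`: it meets every closed unbounded subset of `κ`. -/
def Stationary (S : Set (K κ)) : Prop :=
  ∀ C : Set (K κ), ClosedIn κ C → UnboundedIn κ C → (S ∩ C).Nonempty

/-- `T` is stationary slim: `|T(α)| ≤ |α|` for stationarily many `α < κ`. -/
def StatSlim (T : Set (PreFun κ)) : Prop :=
  Stationary κ {α : K κ | #(level κ T α) ≤ #{β : K κ // β < α}}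

/-- `α` is a limit ordinal (as an element of `κ`): it is neither the least element
nor a successor. -/
def IsLimitElt (α : K κ) : Prop :=
  (∃ β : K κ, β < α) ∧ ∀ β : K κ, β < α → ∃ γ : K κ, β < γ ∧ γ < α

/-- The boundary `∂T` of a subtree `T`: the minimal elements of `^{<κ}κ \ T`. -/
def boundary (T : Set (PreFun κ)) : Set (PreFun κ) :=
  {t | t ∉ T ∧ ∀ γ : K κ, γ < t.1 → cut κ t γ ∈ T}

/-- `T` is superthin: for every limit ordinal `α < κ`, the set of elements of
`T ∪ ∂T` with domain `α` has cardinality `< κ`. -/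
def IsSuperthin (T : Set (PreFun κ)) : Prop :=
  ∀ α : K κ, IsLimitElt κ α → #{s ∈ T ∪ boundary κ T | s.1 = α} < κ

/-- `T` is pruned: every element of `T` has a proper extension in `T`. -/
def IsPruned (T : Set (PreFun κ)) : Prop :=
  ∀ s ∈ T, ∃ t ∈ T, s.1 < t.1 ∧ cut κ t s.1 = s

/-- `T` is `<κ`-closed: the union of every (strictly increasing with respect to proper
end-extension) sequence of elements of `T` indexed by an ordinal `< κ` again lies in `T`.
Here `u` is the union of the sequence `s` iff the domain of `u` is the least upper bound
of the domains of the `s ξ` and every `s ξ` is a restriction of `u`. -/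
def IsLtClosed (T : Set (PreFun κ)) : Prop :=
  ∀ (γ : K κ) (s : {ξ : K κ // ξ < γ} → PreFun κ),
    (∀ ξ ζ : {ξ : K κ // ξ < γ}, ξ < ζ → (s ξ).1 < (s ζ).1 ∧ cut κ (s ζ) (s ξ).1 = s ξ) →
    (∀ ξ, s ξ ∈ T) →
    ∀ u : PreFun κ, IsLUB (Set.range fun ξ => (s ξ).1) u.1 →
      (∀ ξ, cut κ u (s ξ).1 = s ξ) → u ∈ T

/-- `T` contains a Cantor subtree. -/
def HasCantorSubtree (T : Set (PreFun κ)) : Prop :=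
  ∃ (l : ℕ → K κ) (lam : K κ), StrictMono l ∧ IsLUB (Set.range l) lam ∧
    (level κ T lam).Nonempty ∧
    ∃ B ⊆ level κ T lam, ¬ B.Countable ∧
      ∀ n : ℕ, ((fun t => cut κ t (l n)) '' B).Countable

/-- proper end-extension on `^{<κ}κ`. -/
def pext (s t : PreFun κ) : Prop := s.1 < t.1 ∧ cut κ t s.1 = s

/-- A set `A ⊆ ^{<κ}κ`, regarded as a tree under proper end-extension, is trivially
coherent: it is order-isomorphic to a subtree of `^{<λ}2` (for `λ` its height) all of
whose elements `t` satisfy that `t⁻¹{0}` is finite.  (Here the comparison tree is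
realized as a subtree `U` of `^{<κ}κ` taking only the values `0` and `1`, i.e. values
with at most one predecessor, such that each `u ∈ U` takes the value `0`, i.e. the
value with no predecessor, only finitely often.) -/
def TriviallyCoherent (A : Set (PreFun κ)) : Prop :=
  ∃ U : Set (PreFun κ),
    IsSubtree κ U ∧
    (∀ u ∈ U, ∀ β : {b : K κ // b < u.1}, #{γ : K κ // γ < u.2 β} ≤ 1) ∧
    (∀ u ∈ U, {β : {b : K κ // b < u.1} | ¬ ∃ γ : K κ, γ < u.2 β}.Finite) ∧
    ∃ f : A → U, Function.Bijective f ∧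
      ∀ s t : A, pext κ s.1 t.1 ↔ pext κ (f s).1 (f t).1

/-- `T` is locally coherent: each of its proper initial segments `T ∩ ^{<α}κ` is
trivially coherent. -/
def LocallyCoherent (T : Set (PreFun κ)) : Prop :=
  ∀ α : K κ, TriviallyCoherent κ {s ∈ T | s.1 < α}

end GBaire

/-!
Fix a limit `α < κ`. Every element of `T ∪ ∂T` of length `α` is a branch through
`A = T ∩ ^{<α}κ`, and trivial coherence of `A` gives a tree isomorphism `f` of `A` onto a
tree `U` of `0`-`1` functions with finitely many zeros. Since `f` preserves levels, the images of
the restrictions of a branch `s` cohere to a `0`-`1` function on `α` each of whose initial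
segments has finitely many zeros. Its zero set is therefore countable, and it determines `s`
because `α` is a limit. Hence there are at most `|α|^ℵ₀ < κ` such branches.
-/

lemma eq_of_card_Iio_le_one {X : Type*} [LinearOrder X] {v w : X} (hv : #{γ // γ < v} ≤ 1)
    (hw : #{γ // γ < w} ≤ 1) (h : (∃ γ, γ < v) ↔ ∃ γ, γ < w) : v = w := by
  have hnot : ∀ {v w : X}, #{γ // γ < w} ≤ 1 → ((∃ γ, γ < v) ↔ ∃ γ, γ < w) → ¬v < w := by
    intro v w hw h hvw
    obtain ⟨γ, hγ⟩ := h.2 ⟨v, hvw⟩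
    have := Cardinal.le_one_iff_subsingleton.1 hw
    exact hγ.ne (congrArg Subtype.val
      (Subsingleton.elim (⟨γ, hγ.trans hvw⟩ : {γ // γ < w}) ⟨v, hvw⟩))
  exact le_antisymm (not_lt.1 (hnot hv h.symm)) (not_lt.1 (hnot hw h))

lemma countable_of_forall_finite_lt {X : Type*} [LinearOrder X] {Z : Set X}
    (h : ∀ z ∈ Z, {x ∈ Z | x < z}.Finite) : Z.Countable := by
  have hmono : StrictMono fun z : Z => {x ∈ Z | x < z.1}.ncard := fun z w hzw =>
    Set.ncard_lt_ncard (Set.ssubset_iff_exists.2 ⟨fun x hx => ⟨hx.1, hx.2.trans hzw⟩,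
      z, ⟨z.2, hzw⟩, fun hz => lt_irrefl _ hz.2⟩) (h w w.2)
  exact Set.countable_coe_iff.1 hmono.injective.countable

namespace GBaire

variable {κ : Cardinal.{u}}

lemma preFun_ext {s t : PreFun κ} (h1 : s.1 = t.1)
    (h2 : ∀ β (hβ : β < s.1) (hβ' : β < t.1), s.2 ⟨β, hβ⟩ = t.2 ⟨β, hβ'⟩) : s = t := by
  obtain ⟨a, f⟩ := s
  obtain ⟨b, g⟩ := t
  obtain rfl : a = b := h1
  rw [show f = g from funext fun β => h2 β.1 β.2 β.2]

lemma preFun_val_congr {s t : PreFun κ} (h : s = t) {β : K κ} (hβ : β < s.1) (hβ' : β < t.1) :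
    s.2 ⟨β, hβ⟩ = t.2 ⟨β, hβ'⟩ := by
  subst h; rfl

lemma cut_fst_of_le (s : PreFun κ) {γ : K κ} (h : γ ≤ s.1) : (cut κ s γ).1 = γ :=
  min_eq_left h

lemma cut_cut (s : PreFun κ) (γ γ' : K κ) : cut κ (cut κ s γ') γ = cut κ s (min γ γ') :=
  preFun_ext (min_assoc _ _ _).symm fun _ _ _ => rfl

lemma cut_self (s : PreFun κ) : cut κ s s.1 = s :=
  preFun_ext (min_self _) fun _ _ _ => rfl

lemma pext_cut (t : PreFun κ) {γ : K κ} (h : γ < t.1) : pext κ (cut κ t γ) t := by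
  rw [pext, cut_fst_of_le t h.le]
  exact ⟨h, rfl⟩

lemma pext_cut_cut (s : PreFun κ) {γ β : K κ} (h : γ < β) (hβ : β ≤ s.1) :
    pext κ (cut κ s γ) (cut κ s β) := by
  rw [pext, cut_fst_of_le s (h.le.trans hβ), cut_fst_of_le s hβ, cut_cut, min_eq_left h.le]
  exact ⟨h, rfl⟩

lemma eq_cut_of_pext_cut {s y : PreFun κ} {β : K κ} (hβ : β ≤ s.1) (h : pext κ y (cut κ s β)) :
    y.1 < β ∧ y = cut κ s y.1 := by
  obtain ⟨hlt, hy⟩ := h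
  rw [cut_fst_of_le s hβ] at hlt
  rw [cut_cut, min_eq_left hlt.le] at hy
  exact ⟨hlt, hy.symm⟩

lemma cut_mem_of_mem_union_boundary {T : Set (PreFun κ)} (hT : IsSubtree κ T) {s : PreFun κ}
    (hs : s ∈ T ∪ boundary κ T) : ∀ γ < s.1, cut κ s γ ∈ T := by
  rcases hs with hs | hs
  exacts [hT s hs, hs.2]

lemma eq_of_forall_cut_eq {s t : PreFun κ} {α : K κ} (hα : IsLimitElt κ α) (hs : s.1 = α)
    (ht : t.1 = α) (h : ∀ β < α, cut κ s β = cut κ t β) : s = t := by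
  refine preFun_ext (hs.trans ht.symm) fun γ hγs hγt => ?_
  obtain ⟨β, hγβ, hβα⟩ := hα.2 γ (hs ▸ hγs)
  have hsβ : γ < (cut κ s β).1 := by rwa [cut_fst_of_le s (hs ▸ hβα.le)]
  have htβ : γ < (cut κ t β).1 := by rwa [cut_fst_of_le t (ht ▸ hβα.le)]
  exact preFun_val_congr (h β hβα) hsβ htβ

lemma aleph0_le_mk_Iio {α : K κ} (hα : IsLimitElt κ α) : ℵ₀ ≤ #(Iio α) := by
  obtain ⟨β, hβ⟩ := hα.1
  have : Nonempty (Iio α) := ⟨⟨β, hβ⟩⟩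
  have : NoMaxOrder (Iio α) :=
    ⟨fun b => let ⟨γ, hbγ, hγα⟩ := hα.2 b b.2; ⟨⟨γ, hγα⟩, hbγ⟩⟩
  exact Cardinal.infinite_iff.1 inferInstance

/-- The positions at which `u` takes the value `0`, the element of `κ` without predecessors. -/
def zeroSet (u : PreFun κ) : Set (K κ) := {β | ∃ h : β < u.1, ¬∃ γ, γ < u.2 ⟨β, h⟩}

lemma mem_zeroSet {u : PreFun κ} {β : K κ} (h : β < u.1) :
    β ∈ zeroSet u ↔ ¬∃ γ, γ < u.2 ⟨β, h⟩ :=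
  ⟨fun ⟨_, h0⟩ => h0, fun h0 => ⟨h, h0⟩⟩

lemma zeroSet_subset_Iio (u : PreFun κ) : zeroSet u ⊆ Iio u.1 := fun _ ⟨h, _⟩ => h

lemma zeroSet_cut (u : PreFun κ) (γ : K κ) : zeroSet (cut κ u γ) = zeroSet u ∩ Iio γ := by
  ext β
  constructor
  · rintro ⟨h, h0⟩
    exact ⟨⟨h.trans_le (min_le_right _ _), h0⟩, h.trans_le (min_le_left _ _)⟩
  · rintro ⟨⟨h, h0⟩, hγ⟩
    exact ⟨lt_min hγ h, h0⟩

lemma zeroSet_finite {u : PreFun κ} (h : {β : {b // b < u.1} | ¬∃ γ, γ < u.2 β}.Finite) :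
    (zeroSet u).Finite :=
  (h.image Subtype.val).subset fun β ⟨hβ, h0⟩ => ⟨⟨β, hβ⟩, h0, rfl⟩

lemma eq_of_zeroSet_eq {u v : PreFun κ} (hu : ∀ β, #{γ // γ < u.2 β} ≤ 1)
    (hv : ∀ β, #{γ // γ < v.2 β} ≤ 1) (hdom : u.1 = v.1) (h : zeroSet u = zeroSet v) : u = v :=
  preFun_ext hdom fun _ hβu hβv => eq_of_card_Iio_le_one (hu _) (hv _) <|
    not_iff_not.1 <| (mem_zeroSet hβu).symm.trans (h ▸ mem_zeroSet hβv)

section PextIso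

variable {A U : Set (PreFun κ)} {f : A → U} {s : PreFun κ}

theorem fst_apply_cut (hU : IsSubtree κ U) (hsurj : Function.Surjective f)
    (hf : ∀ a b : A, pext κ a.1 b.1 ↔ pext κ (f a).1 (f b).1)
    (hs : ∀ γ < s.1, cut κ s γ ∈ A) (β : K κ) (hβ : β < s.1) :
    (f ⟨cut κ s β, hs β hβ⟩).1.1 = β := by
  induction β using WellFoundedLT.induction with
  | ind β IH =>
  set b := (f ⟨cut κ s β, hs β hβ⟩).1
  refine le_antisymm (not_lt.1 fun hlt => ?_) (not_lt.1 fun hlt => ?_)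
  · obtain ⟨y, hy⟩ := hsurj ⟨cut κ b β, hU b (f _).2 β hlt⟩
    have hpy : pext κ y.1 (cut κ s β) :=
      (hf y ⟨cut κ s β, hs β hβ⟩).2 (by rw [hy]; exact pext_cut b hlt)
    obtain ⟨hyβ, hys⟩ := eq_cut_of_pext_cut hβ.le hpy
    have hyA : (⟨cut κ s y.1.1, hs _ (hyβ.trans hβ)⟩ : A) = y := Subtype.ext hys.symm
    have hfy := IH _ hyβ (hyβ.trans hβ)
    rw [hyA, hy, cut_fst_of_le b hlt.le] at hfy
    exact hyβ.ne' hfy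
  · have hp := ((hf ⟨cut κ s b.1, hs _ (hlt.trans hβ)⟩ ⟨cut κ s β, hs β hβ⟩).1
      (pext_cut_cut s hlt hβ.le)).1
    rw [IH _ hlt (hlt.trans hβ)] at hp
    exact lt_irrefl _ hp

theorem apply_cut_eq_cut_apply (hU : IsSubtree κ U) (hsurj : Function.Surjective f)
    (hf : ∀ a b : A, pext κ a.1 b.1 ↔ pext κ (f a).1 (f b).1)
    (hs : ∀ γ < s.1, cut κ s γ ∈ A) {β β' : K κ} (hββ' : β ≤ β') (hβ' : β' < s.1) :
    (f ⟨cut κ s β, hs β (hββ'.trans_lt hβ')⟩).1 = cut κ (f ⟨cut κ s β', hs β' hβ'⟩).1 β := by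
  rcases hββ'.lt_or_eq with h | rfl
  · have hp := ((hf ⟨cut κ s β, hs β (h.trans hβ')⟩ ⟨cut κ s β', hs β' hβ'⟩).1
      (pext_cut_cut s h hβ'.le)).2
    rw [fst_apply_cut hU hsurj hf] at hp
    exact hp.symm
  · have h := fst_apply_cut hU hsurj hf hs β hβ'
    set u := (f ⟨cut κ s β, hs β hβ'⟩).1
    calc u = cut κ u u.1 := (cut_self u).symm
      _ = cut κ u β := by rw [h]

def branchZeroSet (f : A → U) (s : PreFun κ) (hs : ∀ γ < s.1, cut κ s γ ∈ A) : Set (K κ) :=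
  ⋃ β, ⋃ hβ : β < s.1, zeroSet (f ⟨cut κ s β, hs β hβ⟩).1

theorem branchZeroSet_subset_Iio (hU : IsSubtree κ U) (hsurj : Function.Surjective f)
    (hf : ∀ a b : A, pext κ a.1 b.1 ↔ pext κ (f a).1 (f b).1)
    (hs : ∀ γ < s.1, cut κ s γ ∈ A) : branchZeroSet f s hs ⊆ Iio s.1 :=
  iUnion₂_subset fun β hβ => (zeroSet_subset_Iio _).trans <| by
    rw [fst_apply_cut hU hsurj hf hs β hβ]
    exact Iio_subset_Iio hβ.le

theorem branchZeroSet_inter_Iio (hU : IsSubtree κ U) (hsurj : Function.Surjective f)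
    (hf : ∀ a b : A, pext κ a.1 b.1 ↔ pext κ (f a).1 (f b).1)
    (hs : ∀ γ < s.1, cut κ s γ ∈ A) {β : K κ} (hβ : β < s.1) :
    branchZeroSet f s hs ∩ Iio β = zeroSet (f ⟨cut κ s β, hs β hβ⟩).1 := by
  refine subset_antisymm ?_ fun x hx => ⟨mem_iUnion₂.2 ⟨β, hβ, hx⟩, ?_⟩
  · rintro x ⟨hx, hxβ⟩
    obtain ⟨β', hβ', hx⟩ := mem_iUnion₂.1 hx
    have hmax := max_lt hβ hβ'
    rw [apply_cut_eq_cut_apply hU hsurj hf hs (le_max_left β β') hmax, zeroSet_cut]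
    rw [apply_cut_eq_cut_apply hU hsurj hf hs (le_max_right β β') hmax, zeroSet_cut] at hx
    exact ⟨hx.1, hxβ⟩
  · have hx := zeroSet_subset_Iio _ hx
    rwa [fst_apply_cut hU hsurj hf hs β hβ] at hx

theorem branchZeroSet_countable (hU : IsSubtree κ U) (hsurj : Function.Surjective f)
    (hf : ∀ a b : A, pext κ a.1 b.1 ↔ pext κ (f a).1 (f b).1)
    (hfin : ∀ u ∈ U, {β : {b // b < u.1} | ¬∃ γ, γ < u.2 β}.Finite)
    (hs : ∀ γ < s.1, cut κ s γ ∈ A) (hlim : IsLimitElt κ s.1) :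
    (branchZeroSet f s hs).Countable := by
  refine countable_of_forall_finite_lt fun z hz => ?_
  obtain ⟨β, hzβ, hβ⟩ := hlim.2 z (branchZeroSet_subset_Iio hU hsurj hf hs hz)
  refine (zeroSet_finite (hfin _ (f ⟨cut κ s β, hs β hβ⟩).2)).subset fun x ⟨hx, hxz⟩ => ?_
  rw [← branchZeroSet_inter_Iio hU hsurj hf hs hβ]
  exact ⟨hx, hxz.trans hzβ⟩

theorem eq_of_branchZeroSet_eq (hU : IsSubtree κ U) (hbij : Function.Bijective f)
    (hf : ∀ a b : A, pext κ a.1 b.1 ↔ pext κ (f a).1 (f b).1)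
    (hval : ∀ u ∈ U, ∀ β, #{γ // γ < u.2 β} ≤ 1) {t : PreFun κ}
    (hs : ∀ γ < s.1, cut κ s γ ∈ A) (ht : ∀ γ < t.1, cut κ t γ ∈ A) (hlim : IsLimitElt κ s.1)
    (hst : s.1 = t.1) (h : branchZeroSet f s hs = branchZeroSet f t ht) : s = t := by
  refine eq_of_forall_cut_eq hlim rfl hst.symm fun β hβ => ?_
  have hβt : β < t.1 := hst ▸ hβ
  have himg : f ⟨cut κ s β, hs β hβ⟩ = f ⟨cut κ t β, ht β hβt⟩ := Subtype.ext <|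
    eq_of_zeroSet_eq (hval _ (f _).2) (hval _ (f _).2)
      ((fst_apply_cut hU hbij.2 hf hs β hβ).trans (fst_apply_cut hU hbij.2 hf ht β hβt).symm)
      (by rw [← branchZeroSet_inter_Iio hU hbij.2 hf hs hβ,
        ← branchZeroSet_inter_Iio hU hbij.2 hf ht hβt, h])
  exact congrArg Subtype.val (hbij.1 himg)

end PextIso

theorem TriviallyCoherent.mk_branches_le {A : Set (PreFun κ)} (hA : TriviallyCoherent κ A)
    {α : K κ} (hα : IsLimitElt κ α) :
    #{s : PreFun κ | s.1 = α ∧ ∀ γ < s.1, cut κ s γ ∈ A} ≤ #(Iio α) ^ ℵ₀ := by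
  obtain ⟨U, hU, hval, hfin, f, hbij, hf⟩ := hA
  let Z (s : {s : PreFun κ | s.1 = α ∧ ∀ γ < s.1, cut κ s γ ∈ A}) :
      {t : Set (K κ) // t ⊆ Iio α ∧ #t ≤ ℵ₀} :=
    ⟨branchZeroSet f s.1 s.2.2,
      (branchZeroSet_subset_Iio hU hbij.2 hf s.2.2).trans_eq (congrArg Iio s.2.1),
      (branchZeroSet_countable hU hbij.2 hf hfin s.2.2 (by rwa [s.2.1])).le_aleph0⟩
  have hZ : Function.Injective Z := fun s t hst => Subtype.ext <|
    eq_of_branchZeroSet_eq hU hbij hf hval s.2.2 t.2.2 (by rwa [s.2.1]) (s.2.1.trans t.2.1.symm)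
      (congrArg Subtype.val hst)
  calc _ ≤ #{t : Set (K κ) // t ⊆ Iio α ∧ #t ≤ ℵ₀} := mk_le_of_injective hZ
    _ ≤ max #(Iio α) ℵ₀ ^ ℵ₀ := mk_bounded_subset_le _ _
    _ = #(Iio α) ^ ℵ₀ := by rw [max_eq_left (aleph0_le_mk_Iio hα)]

theorem superthin_of_locallyCoherent_general
    (κ : Cardinal.{u})
    (hpow : ∀ lam : Cardinal.{u}, lam < κ → lam ^ ℵ₀ < κ)
    (T : Set (PreFun κ)) (hT : IsKurepa κ T) (hlc : LocallyCoherent κ T) :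
    IsSuperthin κ T := by
  intro α hα
  have hsub : {s ∈ T ∪ boundary κ T | s.1 = α} ⊆
      {s : PreFun κ | s.1 = α ∧ ∀ γ < s.1, cut κ s γ ∈ {t ∈ T | t.1 < α}} :=
    fun s ⟨hs, hsα⟩ => ⟨hsα, fun γ hγ => ⟨cut_mem_of_mem_union_boundary hT.1 hs γ hγ,
      (cut_fst_of_le s hγ.le).trans_lt (hsα ▸ hγ)⟩⟩
  calc #_ ≤ _ := mk_le_mk_of_subset hsub
    _ ≤ #(Iio α) ^ ℵ₀ := (hlc α).mk_branches_le hα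
    _ < κ := hpow _ (by simpa using Cardinal.mk_Iio_lt α (by simp))

/-- Let `κ` be a regular cardinal with `λ^ω < κ` for every cardinal
`λ < κ`.  Then every locally coherent `κ`-Kurepa subtree of `^{<κ}κ` is superthin. -/
theorem superthin_of_locallyCoherent
    (κ : Cardinal.{u}) (hreg : κ.IsRegular)
    (hpow : ∀ lam : Cardinal.{u}, lam < κ → lam ^ ℵ₀ < κ)
    (T : Set (PreFun κ)) (hT : IsKurepa κ T) (hlc : LocallyCoherent κ T) :
    IsSuperthin κ T :=
  superthin_of_locallyCoherent_general κ hpow T hT hlc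

end GBaire
end
end

section
/- Let κ be an uncountable regular cardinal, let X be a subset of ^κκ, and let r : ^κκ → ^κκ be a continuous function whose range is contained in X with r(x) = x for every x ∈ X. Then for every α < κ and every subset A of X of cardinality less than κ, there exists β with α < β < κ such that: (1) x↾β ≠ y↾β for all distinct x, y ∈ A; and (2) r maps N_{x↾β} into N_{x↾β} for every x ∈ A. -/
open Cardinal Set

noncomputable section

/-!
Continuity of `r` at the fixed points `x ∈ A` gives, for every `δ`, some `β` with
`r(N_{x↾β}) ⊆ N_{x↾δ}`; since `|A| < κ` and `κ` is regular, one such `F δ` serves all of `A`.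
If every `γ < β` lies below some `δ` with `F δ ≤ β`, then `r(N_{x↾β}) ⊆ N_{x↾β}`, and such `β`
arise as suprema of `ω`-iterations, which stay below `κ` because `cf κ > ω`. Starting the
iteration above the fewer than `κ` points where two elements of `A` differ gives the splitting.
-/

open Topology

namespace GBaire

universe u v

section Cofinality

variable {α : Type v} [LinearOrder α]

theorem exists_forall_lt_of_mk_lt_cof {s : Set α} (hs : #s < Order.cof α) :
    ∃ b, ∀ a ∈ s, a < b := by
  by_contra! h
  exact (Order.cof_le h).not_gt hs

variable [WellFoundedLT α]

/-- `b` is the supremum of an `ω`-iteration `a < G a < G (G a) < ⋯` with `F δ < G δ`. -/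
theorem exists_lt_forall_lt_exists_lt_apply_le (hα : ℵ₀ < Order.cof α) (F : α → α) (a : α) :
    ∃ b, a < b ∧ ∀ γ < b, ∃ δ, γ < δ ∧ F δ ≤ b := by
  have hstep : ∀ δ : α, ∃ δ', δ < δ' ∧ F δ < δ' := fun δ => by
    have hfin : #({δ, F δ} : Set α) < Order.cof α :=
      (Cardinal.lt_aleph0_iff_set_finite.mpr (Set.toFinite _)).trans hα
    obtain ⟨δ', hδ'⟩ := exists_forall_lt_of_mk_lt_cof hfin
    exact ⟨δ', hδ' δ (by simp), hδ' (F δ) (by simp)⟩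
  choose G hGgt hGF using hstep
  set g : ℕ → α := fun n => G^[n] a
  have hg_succ : ∀ n, g (n + 1) = G (g n) := fun n => Function.iterate_succ_apply' G n a
  have hbdd : (upperBounds (Set.range g)).Nonempty := by
    have hcount : #(Set.range g) < Order.cof α :=
      (Cardinal.le_aleph0_iff_set_countable.mpr (Set.countable_range g)).trans_lt hα
    obtain ⟨c, hc⟩ := exists_forall_lt_of_mk_lt_cof hcount
    exact ⟨c, fun x hx => (hc x hx).le⟩
  obtain ⟨b, hb⟩ : ∃ b, IsLUB (Set.range g) b :=
    ⟨_, WellFounded.min_mem wellFounded_lt _ hbdd,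
      fun _ hc => WellFounded.min_le wellFounded_lt hc⟩
  refine ⟨b, (hGgt a).trans_le (hb.1 ⟨1, rfl⟩), fun γ hγ => ?_⟩
  obtain ⟨_, ⟨n, rfl⟩, hγn⟩ := (lt_isLUB_iff hb).mp hγ
  exact ⟨g n, hγn, (hGF (g n)).le.trans ((hg_succ n).symm ▸ hb.1 ⟨n + 1, rfl⟩)⟩

end Cofinality

variable {κ : Cardinal.{u}}

theorem cof_K (hreg : κ.IsRegular) : Order.cof (K κ) = κ := by
  rw [Ordinal.cof_toType, hreg.cof_ord]

theorem exists_forall_lt_of_mk_lt (hreg : κ.IsRegular) {s : Set (K κ)} (hs : #s < κ) :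
    ∃ b, ∀ a ∈ s, a < b :=
  exists_forall_lt_of_mk_lt_cof (by rwa [cof_K hreg])

theorem resT_eq_resT_iff {x y : K κ → K κ} {β : K κ} :
    resT κ x β = resT κ y β ↔ ∀ γ < β, x γ = y γ := by
  refine ⟨fun h γ hγ => ?_, fun h => ?_⟩
  · exact congrFun (eq_of_heq (Sigma.ext_iff.mp h).2) ⟨γ, hγ⟩
  · exact Sigma.ext rfl (heq_of_eq (funext fun γ => h γ.1 γ.2))

theorem mem_Nbhd_resT {z x : K κ → K κ} {β : K κ} :
    z ∈ Nbhd κ (resT κ x β) ↔ ∀ γ < β, z γ = x γ :=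
  resT_eq_resT_iff

theorem Nbhd_resT_subset_of_le {x : K κ → K κ} {δ β : K κ} (h : δ ≤ β) :
    Nbhd κ (resT κ x β) ⊆ Nbhd κ (resT κ x δ) := fun _ hz =>
  mem_Nbhd_resT.mpr fun γ hγ => mem_Nbhd_resT.mp hz γ (hγ.trans_le h)

theorem exists_Nbhd_resT_subset [Nonempty (K κ)] {U : Set (K κ → K κ)}
    (hU : IsOpen[baire κ] U) {x : K κ → K κ} (hx : x ∈ U) :
    ∃ β, Nbhd κ (resT κ x β) ⊆ U := by
  induction hU generalizing x with
  | basic V hV =>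
    obtain ⟨s, rfl⟩ := hV
    exact ⟨s.1, by rw [show resT κ x s.1 = s from hx]⟩
  | univ => exact ⟨Classical.arbitrary _, Set.subset_univ _⟩
  | inter U V _ _ ihU ihV =>
    obtain ⟨β₁, h₁⟩ := ihU hx.1
    obtain ⟨β₂, h₂⟩ := ihV hx.2
    exact ⟨max β₁ β₂, Set.subset_inter
      ((Nbhd_resT_subset_of_le (le_max_left _ _)).trans h₁)
      ((Nbhd_resT_subset_of_le (le_max_right _ _)).trans h₂)⟩
  | sUnion S _ ih =>
    obtain ⟨V, hVS, hxV⟩ := hx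
    obtain ⟨β, hβ⟩ := ih V hVS hxV
    exact ⟨β, hβ.trans (Set.subset_sUnion_of_mem hVS)⟩

theorem exists_mapsTo_Nbhd_resT_of_apply_eq [Nonempty (K κ)]
    {r : (K κ → K κ) → (K κ → K κ)} (hr : Continuous[baire κ, baire κ] r)
    {x : K κ → K κ} (hx : r x = x) (δ : K κ) :
    ∃ β, Set.MapsTo r (Nbhd κ (resT κ x β)) (Nbhd κ (resT κ x δ)) := by
  have hopen : IsOpen[baire κ] (r ⁻¹' Nbhd κ (resT κ x δ)) :=
    @Continuous.isOpen_preimage _ _ (baire κ) (baire κ) r hr _ (.basic _ ⟨_, rfl⟩)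
  have hmem : x ∈ r ⁻¹' Nbhd κ (resT κ x δ) := by
    rw [Set.mem_preimage, hx]
    rfl
  exact exists_Nbhd_resT_subset hopen hmem

theorem exists_uniform_mapsTo_Nbhd_resT (hreg : κ.IsRegular)
    {r : (K κ → K κ) → (K κ → K κ)} {A : Set (K κ → K κ)} (hA : #A < κ)
    (hmod : ∀ x ∈ A, ∀ δ, ∃ β, Set.MapsTo r (Nbhd κ (resT κ x β)) (Nbhd κ (resT κ x δ)))
    (δ : K κ) : ∃ β, ∀ x ∈ A, Set.MapsTo r (Nbhd κ (resT κ x β)) (Nbhd κ (resT κ x δ)) := by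
  choose B hB using fun x : A => hmod x x.2 δ
  obtain ⟨β, hβ⟩ := exists_forall_lt_of_mk_lt hreg (Cardinal.mk_range_le.trans_lt hA)
  exact ⟨β, fun x hx =>
    (hB ⟨x, hx⟩).mono_left (Nbhd_resT_subset_of_le (hβ _ ⟨⟨x, hx⟩, rfl⟩).le)⟩

theorem exists_lt_forall_le_resT_ne (hreg : κ.IsRegular) {A : Set (K κ → K κ)} (hA : #A < κ)
    (α : K κ) : ∃ β₀, α < β₀ ∧ ∀ β, β₀ ≤ β →
      ∀ x ∈ A, ∀ y ∈ A, x ≠ y → resT κ x β ≠ resT κ y β := by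
  choose d hd using fun p : {p : A × A // p.1 ≠ p.2} =>
    Function.ne_iff.mp (Subtype.coe_injective.ne p.2)
  have hcard : #(insert α (Set.range d) : Set (K κ)) < κ := by
    refine Cardinal.mk_insert_le.trans_lt (Cardinal.add_lt_of_lt hreg.aleph0_le ?_
      (Cardinal.one_lt_aleph0.trans_le hreg.aleph0_le))
    refine Cardinal.mk_range_le.trans_lt ((Cardinal.mk_subtype_le _).trans_lt ?_)
    simpa using Cardinal.mul_lt_of_lt hreg.aleph0_le hA hA
  obtain ⟨β₀, hβ₀⟩ := exists_forall_lt_of_mk_lt hreg hcard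
  refine ⟨β₀, hβ₀ α (Set.mem_insert _ _), fun β hβ x hx y hy hxy hres => ?_⟩
  let p : {p : A × A // p.1 ≠ p.2} := ⟨(⟨x, hx⟩, ⟨y, hy⟩), fun h => hxy (congrArg Subtype.val h)⟩
  have hdβ : d p < β := (hβ₀ _ (Set.mem_insert_of_mem _ ⟨p, rfl⟩)).trans_le hβ
  exact hd p (resT_eq_resT_iff.mp hres (d p) hdβ)

theorem exists_split_and_mapsTo_general
    (κ : Cardinal.{u}) (hκ : ℵ₀ < κ) (hreg : κ.IsRegular)
    (X : Set (K κ → K κ)) (r : (K κ → K κ) → (K κ → K κ))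
    (hr : @Continuous _ _ (baire κ) (baire κ) r)
    (hid : ∀ x ∈ X, r x = x)
    (α : K κ) (A : Set (K κ → K κ)) (hAX : A ⊆ X) (hA : #A < κ) :
    ∃ β : K κ, α < β ∧
      (∀ x ∈ A, ∀ y ∈ A, x ≠ y → resT κ x β ≠ resT κ y β) ∧
      ∀ x ∈ A, Set.MapsTo r (Nbhd κ (resT κ x β)) (Nbhd κ (resT κ x β)) := by
  have : Nonempty (K κ) := ⟨α⟩
  obtain ⟨β₀, hαβ₀, hsep⟩ := exists_lt_forall_le_resT_ne hreg hA α
  choose F hF using exists_uniform_mapsTo_Nbhd_resT hreg hA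
    fun x hx => exists_mapsTo_Nbhd_resT_of_apply_eq hr (hid x (hAX hx))
  obtain ⟨β, hβ₀β, hclosed⟩ :=
    exists_lt_forall_lt_exists_lt_apply_le (by rwa [cof_K hreg]) F β₀
  refine ⟨β, hαβ₀.trans hβ₀β, hsep β hβ₀β.le, fun x hx z hz => mem_Nbhd_resT.mpr fun γ hγ => ?_⟩
  obtain ⟨δ, hγδ, hFδ⟩ := hclosed γ hγ
  exact mem_Nbhd_resT.mp (hF δ x hx (Nbhd_resT_subset_of_le hFδ hz)) γ hγδ

/-- Let `κ` be an uncountable regular cardinal and let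
`r : ^κκ → ^κκ` be a continuous function with range contained in `X ⊆ ^κκ` which is the
identity on `X`.  Then for every `α < κ` and every `A ⊆ X` of cardinality `< κ` there is
`β` with `α < β < κ` such that (1) distinct elements of `A` have distinct restrictions to
`β` and (2) `r` maps `N_{x↾β}` into `N_{x↾β}` for every `x ∈ A`. -/
theorem exists_split_and_mapsTo
    (κ : Cardinal.{u}) (hκ : ℵ₀ < κ) (hreg : κ.IsRegular)
    (X : Set (K κ → K κ)) (r : (K κ → K κ) → (K κ → K κ))
    (hr : @Continuous _ _ (baire κ) (baire κ) r)
    (hrange : Set.range r ⊆ X) (hid : ∀ x ∈ X, r x = x)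
    (α : K κ) (A : Set (K κ → K κ)) (hAX : A ⊆ X) (hA : #A < κ) :
    ∃ β : K κ, α < β ∧
      (∀ x ∈ A, ∀ y ∈ A, x ≠ y → resT κ x β ≠ resT κ y β) ∧
      ∀ x ∈ A, Set.MapsTo r (Nbhd κ (resT κ x β)) (Nbhd κ (resT κ x β)) :=
  exists_split_and_mapsTo_general κ hκ hreg X r hr hid α A hAX hA

end GBaire
end
end
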